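/- Let G be a group and k a commutative ring. The non-autopoietic cochains NP(k[G]^{⊗*}) form a subcomplex of the Hochschild cochain complex (Hom_k(k[G]^{⊗*}, k[G]), δ): if f is non-autopoietic in degree n, then δf is non-autopoietic in degree n+1. -/

import Mathlib

open MonoidAlgebra

variable {k G : Type} [CommRing k] [Group G]

/-- Hochschild cochains on the group ring, modeled by values on basis tuples;
this is `Hom_k(k[G]^{⊗n}, k[G])`. -/
abbrev GCochain (k G : Type) [CommRing k] [Group G] (n : ℕ) : Type :=
  (Fin n → G) → MonoidAlgebra k G

/-- Merge the `i`-th and `(i+1)`-st entries of a tuple. -/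
def gmerge {n : ℕ} (g : Fin (n + 1) → G) (i : Fin n) : Fin n → G := fun j =>
  if (j : ℕ) < i then g j.castSucc
  else if (j : ℕ) = i then g j.castSucc * g j.succ
  else g j.succ

/-- The Hochschild coboundary
`(δf)(g_1,…,g_{n+1}) = g_1 f(g_2,…,g_{n+1}) + Σ_{i=1}^{n} (-1)^i f(g_1,…,g_i g_{i+1},…,g_{n+1})
  + (-1)^{n+1} f(g_1,…,g_n) g_{n+1}`. -/
noncomputable def gdelta (k G : Type) [CommRing k] [Group G] (n : ℕ) :
    GCochain k G n →ₗ[k] GCochain k G (n + 1) :=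
  (LinearMap.pi fun g =>
      (LinearMap.mulLeft k (single (g 0) (1 : k))).comp (LinearMap.proj (Fin.tail g)))
  + (∑ i : Fin n, ((-1 : k) ^ ((i : ℕ) + 1)) •
      LinearMap.pi fun g => LinearMap.proj (gmerge g i))
  + ((-1 : k) ^ (n + 1)) •
      LinearMap.pi fun g =>
        (LinearMap.mulRight k (single (g (Fin.last n)) (1 : k))).comp
          (LinearMap.proj (Fin.init g))

/-- The ordered product of a tuple of group elements. -/
def gprod {n : ℕ} (g : Fin n → G) : G := (List.ofFn g).prod

/-- A cochain is (strictly) autopoietic if `f(g_1 ⊗ ⋯ ⊗ g_n) = λ_{g_1,…,g_n}·(g_1 g_2 ⋯ g_n)`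
(in degree `0`, `f(1) = λ·e`). -/
def IsAP {n : ℕ} (f : GCochain k G n) : Prop :=
  ∀ g : Fin n → G, ∃ c : k, f g = c • single (gprod g) (1 : k)

/-- A cochain is non-autopoietic if the coefficient of `g_1 g_2 ⋯ g_n` in
`f(g_1 ⊗ ⋯ ⊗ g_n)` vanishes for every tuple (in degree `0`, the coefficient of `e`
in `f(1)` vanishes). -/
def IsNP {n : ℕ} (f : GCochain k G n) : Prop :=
  ∀ g : Fin n → G, (f g).coeff (gprod g) = 0

/-! Every term of `(δf)(g_1,…,g_{n+1})` is a value of `f` on a tuple with the same product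
`g_1 ⋯ g_{n+1}`, up to multiplication by `g_1` on the left or by `g_{n+1}` on the right; those
multiplications shift the coefficient at `g_1 ⋯ g_{n+1}` to the coefficient of `f` at the product
of its own arguments, which vanishes. -/

section GroupTuples

variable {n : ℕ}

lemma gprod_cons (a : G) (g : Fin n → G) :
    gprod (Fin.cons a g : Fin (n + 1) → G) = a * gprod g := by
  simp [gprod, List.ofFn_succ]

lemma gprod_eq_mul_gprod_tail (g : Fin (n + 1) → G) : gprod g = g 0 * gprod (Fin.tail g) := by
  rw [← gprod_cons, Fin.cons_self_tail]

lemma gprod_eq_gprod_init_mul (g : Fin (n + 1) → G) :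
    gprod g = gprod (Fin.init g) * g (Fin.last n) := by
  rw [gprod, List.ofFn_succ', List.prod_concat]
  rfl

lemma gprod_tail (g : Fin (n + 1) → G) : gprod (Fin.tail g) = (g 0)⁻¹ * gprod g := by
  rw [gprod_eq_mul_gprod_tail g, inv_mul_cancel_left]

lemma gprod_init (g : Fin (n + 1) → G) :
    gprod (Fin.init g) = gprod g * (g (Fin.last n))⁻¹ := by
  rw [gprod_eq_gprod_init_mul g, mul_inv_cancel_right]

lemma gmerge_zero (g : Fin (n + 2) → G) :
    gmerge g 0 = Fin.cons (g 0 * g 1) (Fin.tail (Fin.tail g)) := by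
  funext j
  refine Fin.cases ?_ (fun j => ?_) j
  · simp [gmerge]
  · simp [gmerge, Fin.tail]

lemma gmerge_succ (g : Fin (n + 2) → G) (i : Fin n) :
    gmerge g i.succ = Fin.cons (g 0) (gmerge (Fin.tail g) i) := by
  funext j
  refine Fin.cases ?_ (fun j => ?_) j
  · simp [gmerge]
  · simp only [gmerge, Fin.cons_succ, Fin.tail, Fin.val_succ, add_lt_add_iff_right,
      add_left_inj]
    split_ifs <;> rfl

lemma gprod_gmerge (g : Fin (n + 1) → G) (i : Fin n) : gprod (gmerge g i) = gprod g := by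
  induction n with
  | zero => exact i.elim0
  | succ n ih =>
    rw [gprod_eq_mul_gprod_tail g]
    cases i using Fin.cases with
    | zero =>
      rw [gmerge_zero, gprod_cons, gprod_eq_mul_gprod_tail (Fin.tail g), mul_assoc]
      rfl
    | succ i => rw [gmerge_succ, gprod_cons, ih]

end GroupTuples

lemma gdelta_apply {n : ℕ} (f : GCochain k G n) (g : Fin (n + 1) → G) :
    gdelta k G n f g = single (g 0) 1 * f (Fin.tail g)
      + ∑ i : Fin n, (-1 : k) ^ ((i : ℕ) + 1) • f (gmerge g i)
      + (-1 : k) ^ (n + 1) • (f (Fin.init g) * single (g (Fin.last n)) 1) := by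
  simp [gdelta]

/-- The non-autopoietic cochains `NP(k[G]^{⊗*})` form a subcomplex of the
Hochschild cochain complex: if `f` is non-autopoietic then so is `δf`. -/
theorem stmt_5 :
    ∀ (n : ℕ) (f : GCochain k G n), IsNP f → IsNP (gdelta k G n f) := by
  intro n f hf g
  have h_left : (single (g 0) 1 * f (Fin.tail g)).coeff (gprod g) = 0 := by
    rw [coeff_single_mul_apply, ← gprod_tail, hf, mul_zero]
  have h_merge (i : Fin n) : (f (gmerge g i)).coeff (gprod g) = 0 :=
    gprod_gmerge g i ▸ hf _
  have h_right : (f (Fin.init g) * single (g (Fin.last n)) 1).coeff (gprod g) = 0 := by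
    rw [coeff_mul_single_apply, ← gprod_init, hf, zero_mul]
  simp [gdelta_apply, coeff_add, coeff_sum, coeff_smul, h_left, h_merge, h_right]
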